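/- arXiv:2309.07044 — 3 statements merged into one kernel-verified Lean document; each statement's English description precedes it below -/
import Mathlib

section
/- There exist constants C > 0 and ℓ₀ ≥ 2 such that for every integer ℓ ≥ ℓ₀, every real λ ∈ [ℓ², (ℓ+1)²], and every integer m, the series Σ_{k≥0, k≠ℓ} A_{k,m}² / (k(k+1) − λ) converges absolutely and | Σ_{k≥0, k≠ℓ} A_{k,m}² / (k(k+1) − λ) | ≤ C·ℓ^{−1/2}·log ℓ. -/
open Real Filter

/-- γ(x) = Γ(x/2 + 1/2) / Γ(x/2 + 1). -/
noncomputable def gam (x : ℝ) : ℝ := Real.Gamma (x/2 + 1/2) / Real.Gamma (x/2 + 1)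

/-- A_{ℓ,m} = sqrt(((2ℓ+1)/π)·γ(ℓ−m)·γ(ℓ+m)) if |m| ≤ ℓ and ℓ−m is even, else 0. -/
noncomputable def Acoef (ℓ : ℕ) (m : ℤ) : ℝ :=
  if |m| ≤ (ℓ : ℤ) ∧ Even ((ℓ : ℤ) - m) then
    Real.sqrt ((2*(ℓ:ℝ)+1)/Real.pi * gam ((ℓ : ℝ) - (m : ℝ)) * gam ((ℓ : ℝ) + (m : ℝ)))
  else 0



lemma gam_pos {x : ℝ} (hx : 0 ≤ x) : 0 < gam x :=
  div_pos (Real.Gamma_pos_of_pos (by linarith)) (Real.Gamma_pos_of_pos (by linarith))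

lemma gam_mul {x : ℝ} (hx : 0 ≤ x) : gam x * gam (x+1) = 2/(x+1) := by
  unfold gam
  have e1 : (x+1)/2 + 1/2 = x/2 + 1 := by ring
  have e2 : (x+1)/2 + 1 = x/2 + 3/2 := by ring
  rw [e1, e2]
  have hA := Real.Gamma_pos_of_pos (by linarith : (0:ℝ) < x/2+1/2)
  have hB := Real.Gamma_pos_of_pos (by linarith : (0:ℝ) < x/2+1)
  have h3 : Real.Gamma (x/2+3/2) = (x/2+1/2) * Real.Gamma (x/2+1/2) := by
    have e : x/2+3/2 = (x/2+1/2)+1 := by ring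
    rw [e, Real.Gamma_add_one (by positivity)]
  rw [h3]
  field_simp

lemma Gamma_sq_midpoint {a b : ℝ} (ha : 0 < a) (hb : 0 < b) :
    Real.Gamma ((a+b)/2) ^ 2 ≤ Real.Gamma a * Real.Gamma b := by
  have h := Real.convexOn_log_Gamma.2 (Set.mem_Ioi.mpr ha) (Set.mem_Ioi.mpr hb)
    (by norm_num : (0:ℝ) ≤ 1/2) (by norm_num : (0:ℝ) ≤ 1/2) (by norm_num)
  simp only [Function.comp, smul_eq_mul] at h
  rw [show (1/2:ℝ) * a + (1/2:ℝ) * b = (a+b)/2 by ring] at h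
  have hGa := Real.Gamma_pos_of_pos ha
  have hGb := Real.Gamma_pos_of_pos hb
  have hGm := Real.Gamma_pos_of_pos (by linarith : 0 < (a+b)/2)
  calc Real.Gamma ((a+b)/2) ^ 2
      = Real.exp (Real.log (Real.Gamma ((a+b)/2)) + Real.log (Real.Gamma ((a+b)/2))) := by
        rw [Real.exp_add, Real.exp_log hGm, sq]
    _ ≤ Real.exp (Real.log (Real.Gamma a) + Real.log (Real.Gamma b)) := by
        apply Real.exp_le_exp.mpr; linarith
    _ = Real.Gamma a * Real.Gamma b := by rw [Real.exp_add, Real.exp_log hGa, Real.exp_log hGb]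

lemma gam_anti {x : ℝ} (hx : 0 ≤ x) : gam (x+1) ≤ gam x := by
  unfold gam
  have e1 : (x+1)/2 + 1/2 = x/2 + 1 := by ring
  have e2 : (x+1)/2 + 1 = x/2 + 3/2 := by ring
  rw [e1, e2]
  have key : Real.Gamma (x/2+1) ^ 2 ≤ Real.Gamma (x/2+1/2) * Real.Gamma (x/2+3/2) := by
    have := Gamma_sq_midpoint (by linarith : (0:ℝ) < x/2+1/2) (by linarith : (0:ℝ) < x/2+3/2)
    rwa [show (x/2+1/2 + (x/2+3/2))/2 = x/2+1 by ring] at this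
  have hA := Real.Gamma_pos_of_pos (by linarith : (0:ℝ) < x/2+1/2)
  have hB := Real.Gamma_pos_of_pos (by linarith : (0:ℝ) < x/2+1)
  have hC := Real.Gamma_pos_of_pos (by linarith : (0:ℝ) < x/2+3/2)
  rw [div_le_div_iff₀ hC hB]
  nlinarith

lemma gam_nat_le_sqrt_pi : ∀ n : ℕ, gam n ≤ Real.sqrt π := by
  intro n
  induction n with
  | zero =>
      unfold gam
      norm_num [Real.Gamma_one]
      rw [Real.Gamma_one_half_eq]
  | succ k ih =>
      rw [show ((k+1:ℕ):ℝ) = (k:ℝ)+1 by push_cast; ring]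
      exact (gam_anti (Nat.cast_nonneg k)).trans ih

lemma gam_nat_le {n : ℕ} (hn : 1 ≤ n) : gam n ≤ Real.sqrt (2/n) := by
  have h0 : (0:ℝ) ≤ (n:ℝ) - 1 := by
    have : (1:ℝ) ≤ n := by exact_mod_cast hn
    linarith
  have hmul := gam_mul h0
  have heq : (n:ℝ) - 1 + 1 = (n:ℝ) := by ring
  rw [heq] at hmul
  have hanti : gam n ≤ gam ((n:ℝ)-1) := by
    have := gam_anti h0
    rwa [heq] at this
  have hpos := gam_pos (Nat.cast_nonneg n : (0:ℝ) ≤ n)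
  have hpos' := gam_pos h0
  have hsq : gam n ^ 2 ≤ 2/(n:ℝ) := by nlinarith
  calc gam n = Real.sqrt (gam n ^ 2) := (Real.sqrt_sq hpos.le).symm
    _ ≤ Real.sqrt (2/n) := Real.sqrt_le_sqrt hsq

lemma gam_zero : gam 0 = Real.sqrt π := by
  unfold gam
  norm_num [Real.Gamma_one]
  rw [Real.Gamma_one_half_eq]

lemma gam_prod_le {k : ℕ} (hk : 1 ≤ k) : ∀ a b : ℕ, a + b = 2*k →
    gam a * gam b ≤ Real.sqrt π * Real.sqrt (2/(k:ℝ)) := by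
  have main : ∀ a b : ℕ, a ≤ b → a + b = 2*k →
      gam a * gam b ≤ Real.sqrt π * Real.sqrt (2/(k:ℝ)) := by
    intro a b hab habk
    have hbk : k ≤ b := by omega
    have hb1 : 1 ≤ b := by omega
    have hgb : gam b ≤ Real.sqrt (2/(k:ℝ)) := by
      refine (gam_nat_le hb1).trans (Real.sqrt_le_sqrt ?_)
      have h1 : (0:ℝ) < k := by exact_mod_cast hk
      have h2 : (k:ℝ) ≤ b := by exact_mod_cast hbk
      exact div_le_div_of_nonneg_left (by norm_num) h1 h2
    exact mul_le_mul (gam_nat_le_sqrt_pi a) hgb (gam_pos (Nat.cast_nonneg b)).le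
      (Real.sqrt_nonneg _)
  intro a b habk
  rcases le_total a b with h | h
  · exact main a b h habk
  · rw [mul_comm]; exact main b a h (by omega)

lemma Acoef_sq_le (k : ℕ) (m : ℤ) : (Acoef k m)^2 ≤ 3 * Real.sqrt ((k:ℝ)+1) := by
  have hs : (0:ℝ) ≤ 3 * Real.sqrt ((k:ℝ)+1) := by positivity
  unfold Acoef
  split_ifs with h
  swap
  · simpa using hs
  obtain ⟨hm, -⟩ := h
  have hm2 : m ≤ (k:ℤ) := (abs_le.mp hm).2
  have hm1 : -(k:ℤ) ≤ m := (abs_le.mp hm).1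
  have hkm1 : (0:ℝ) ≤ (k:ℝ) - m := by
    have : (m:ℝ) ≤ (k:ℝ) := by exact_mod_cast hm2
    linarith
  have hkm2 : (0:ℝ) ≤ (k:ℝ) + m := by
    have : ((-k : ℤ):ℝ) ≤ (m:ℝ) := by exact_mod_cast hm1
    push_cast at this; linarith
  have g1 := gam_pos hkm1
  have g2 := gam_pos hkm2
  have hin : (0:ℝ) ≤ (2*(k:ℝ)+1)/Real.pi * gam ((k:ℝ)-m) * gam ((k:ℝ)+m) := by
    have := Real.pi_pos; positivity
  rw [Real.sq_sqrt hin]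
  rcases Nat.eq_zero_or_pos k with hk0 | hk1
  · subst hk0
    have hm0 : m = 0 := by simpa using hm2.antisymm (by simpa using hm1)
    subst hm0
    simp only [Nat.cast_zero, Int.cast_zero, sub_zero, add_zero, gam_zero]
    rw [show (2*(0:ℝ)+1)/Real.pi * Real.sqrt π * Real.sqrt π
        = (Real.sqrt π * Real.sqrt π)/Real.pi by ring,
      Real.mul_self_sqrt Real.pi_pos.le]
    rw [div_self Real.pi_pos.ne']
    rw [show (0:ℝ)+1 = 1 by ring, Real.sqrt_one]
    norm_num
  · -- k ≥ 1
    set a : ℕ := ((k:ℤ) - m).toNat with ha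
    set b : ℕ := ((k:ℤ) + m).toNat with hb
    have hca : ((a:ℤ)) = (k:ℤ) - m := Int.toNat_of_nonneg (by omega)
    have hcb : ((b:ℤ)) = (k:ℤ) + m := Int.toNat_of_nonneg (by omega)
    have hab : a + b = 2*k := by omega
    have hea : ((k:ℝ) - m) = (a:ℝ) := by
      have : ((a:ℤ):ℝ) = (((k:ℤ) - m : ℤ):ℝ) := by rw [hca]
      push_cast at this ⊢; linarith
    have heb : ((k:ℝ) + m) = (b:ℝ) := by
      have : ((b:ℤ):ℝ) = (((k:ℤ) + m : ℤ):ℝ) := by rw [hcb]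
      push_cast at this ⊢; linarith
    rw [hea, heb]
    have hprod := gam_prod_le hk1 a b hab
    have hstep : (2*(k:ℝ)+1)/Real.pi * gam a * gam b
        ≤ (2*(k:ℝ)+1)/Real.pi * (Real.sqrt π * Real.sqrt (2/(k:ℝ))) := by
      rw [mul_assoc]
      refine mul_le_mul_of_nonneg_left ?_ (by positivity)
      exact hprod
    refine hstep.trans ?_
    -- numeric part
    have hkR : (1:ℝ) ≤ (k:ℝ) := by exact_mod_cast hk1
    have hsk1 : (1:ℝ) ≤ Real.sqrt k := by
      rw [show (1:ℝ) = Real.sqrt 1 by simp]; exact Real.sqrt_le_sqrt hkR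
    have hd : Real.sqrt (2/(k:ℝ)) = Real.sqrt 2 / Real.sqrt k :=
      Real.sqrt_div (by norm_num) _
    rw [hd]
    have hs2sp : Real.sqrt 2 ≤ Real.sqrt π :=
      Real.sqrt_le_sqrt (by linarith [Real.pi_gt_three])
    have hsp2 : Real.sqrt π ^ 2 = π := Real.sq_sqrt Real.pi_pos.le
    have hsk2 : Real.sqrt (k:ℝ) ^ 2 = (k:ℝ) := Real.sq_sqrt (by linarith)
    have step : (2*(k:ℝ)+1)/π * (Real.sqrt π * (Real.sqrt 2 / Real.sqrt k))
        ≤ 3 * Real.sqrt k := by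
      have e : (2*(k:ℝ)+1)/π * (Real.sqrt π * (Real.sqrt 2 / Real.sqrt k))
          = ((2*(k:ℝ)+1)*Real.sqrt π*Real.sqrt 2)/(π * Real.sqrt k) := by ring
      rw [e, div_le_iff₀ (by positivity)]
      nlinarith [mul_le_mul_of_nonneg_left hs2sp
          (by positivity : (0:ℝ) ≤ (2*(k:ℝ)+1)*Real.sqrt π),
        Real.pi_pos, mul_nonneg (sub_nonneg.mpr hkR) Real.pi_pos.le]
    refine step.trans ?_
    have : Real.sqrt (k:ℝ) ≤ Real.sqrt ((k:ℝ)+1) := Real.sqrt_le_sqrt (by linarith)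
    linarith


lemma sqrt_tail_bound {x : ℝ} (hx : (6:ℝ) ≤ x) :
    3*Real.sqrt (x+1)/((3/4)*x^2) ≤ 16*(1/Real.sqrt x - 1/Real.sqrt (x+1)) := by
  set a := Real.sqrt x with hadef
  set b := Real.sqrt (x+1) with hbdef
  have ha2 : a^2 = x := Real.sq_sqrt (by linarith)
  have hb2 : b^2 = x+1 := Real.sq_sqrt (by linarith)
  have ha : (0:ℝ) < a := Real.sqrt_pos.mpr (by linarith)
  have hb : (0:ℝ) < b := Real.sqrt_pos.mpr (by linarith)
  have hab : a ≤ b := Real.sqrt_le_sqrt (by linarith)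
  clear_value a b
  have hba : b ≤ a + 1 := by nlinarith
  have ha6 : (6:ℝ) ≤ a^2 := by rw [ha2]; exact hx
  have hsum : (0:ℝ) < a + b := by positivity
  have h1 : (b-a)*(a+b) = 1 := by
    have e : (b-a)*(a+b) = b^2 - a^2 := by ring
    rw [e, ha2, hb2]; ring
  have lhs_eq : 3*b/((3/4)*x^2) = 4*b/a^4 := by
    rw [← ha2]; field_simp
  have rhs_eq : 16*(1/a - 1/b) = 16*(b-a)/(a*b) := by
    rw [div_sub_div _ _ ha.ne' hb.ne']; ring
  rw [lhs_eq, rhs_eq, div_le_div_iff₀ (by positivity) (by positivity)]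
  refine le_of_mul_le_mul_right ?_ hsum
  have e2 : 16*(b-a)*a^4*(a+b) = 16*a^4 := by linear_combination 16*a^4*h1
  rw [e2]
  have hba2 : b^2 = a^2 + 1 := by rw [hb2, ha2]
  have ha_ge2 : (2:ℝ) ≤ a := by nlinarith [ha6, ha]
  have h6a : 6*a ≤ a^3 := by nlinarith [mul_le_mul_of_nonneg_left ha6 ha.le]
  have hcube : 2*a^2 ≤ a^3 := by nlinarith [mul_le_mul_of_nonneg_right ha_ge2 (mul_self_nonneg a)]
  have hab2 : a + b ≤ 2*a + 1 := by linarith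
  have c3 : 4*b*(a*b)*(a+b) = 4*a*(a^2+1)*(a+b) := by
    rw [show 4*b*(a*b)*(a+b) = 4*a*b^2*(a+b) from by ring, hba2]
  rw [c3]
  have c4 : 4*a*(a^2+1)*(a+b) ≤ 4*a*(a^2+1)*(2*a+1) :=
    mul_le_mul_of_nonneg_left hab2 (by positivity)
  refine c4.trans ?_
  nlinarith [mul_le_mul_of_nonneg_right hcube ha.le, hcube, h6a, ha6, ha_ge2,
    ha.le, mul_le_mul_of_nonneg_right ha_ge2 ha.le]

lemma ptwise {ℓ : ℕ} (hℓ : 2 ≤ ℓ) {lam : ℝ} (hl1 : (ℓ:ℝ)^2 ≤ lam)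
    (hl2 : lam ≤ ((ℓ:ℝ)+1)^2) (m : ℤ) (k : ℕ) :
    |if k = ℓ then (0:ℝ) else (Acoef k m)^2 / ((k:ℝ)*((k:ℝ)+1) - lam)| ≤
      (if k ≠ ℓ ∧ k < 2*ℓ+2 then 6/Real.sqrt ℓ * (1/|(k:ℝ)-(ℓ:ℝ)|) else 0)
      + (if 2*ℓ+2 ≤ k then 16*(1/Real.sqrt k - 1/Real.sqrt ((k:ℝ)+1)) else 0) := by
  have hℓR : (2:ℝ) ≤ (ℓ:ℝ) := by exact_mod_cast hℓ
  by_cases hk : k = ℓ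
  · subst hk
    rw [if_pos rfl, if_neg (by omega : ¬ 2*k+2 ≤ k), if_neg (by simp)]
    simp
  · rw [if_neg hk]
    have hA := Acoef_sq_le k m
    have hA0 : (0:ℝ) ≤ (Acoef k m)^2 := sq_nonneg _
    rw [abs_div, abs_of_nonneg hA0]
    by_cases hk2 : k < 2*ℓ+2
    · -- region 1
      rw [if_pos ⟨hk, hk2⟩, if_neg (by omega : ¬ 2*ℓ+2 ≤ k), add_zero]
      have habs : (0:ℝ) < |(k:ℝ)-(ℓ:ℝ)| := by
        rw [abs_pos, sub_ne_zero]
        exact_mod_cast hk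
      have hsl : (0:ℝ) < Real.sqrt ℓ := Real.sqrt_pos.mpr (by linarith)
      -- denominator lower bound
      have hd : (ℓ:ℝ) * |(k:ℝ)-(ℓ:ℝ)| ≤ |(k:ℝ)*((k:ℝ)+1) - lam| := by
        rcases Nat.lt_or_ge k ℓ with hkl | hkl
        · have hkl' : (k:ℝ) ≤ (ℓ:ℝ) - 1 := by
            have : (k:ℝ) + 1 ≤ (ℓ:ℝ) := by exact_mod_cast hkl
            linarith
          rw [abs_of_nonpos (by linarith : (k:ℝ)-(ℓ:ℝ) ≤ 0)]
          refine le_trans ?_ (neg_le_abs _)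
          have hk0 : (0:ℝ) ≤ (k:ℝ) := Nat.cast_nonneg k
          nlinarith [mul_nonneg hk0 (by linarith : (0:ℝ) ≤ (ℓ:ℝ) - (k:ℝ) - 1)]
        · have hkl2 : ℓ < k := lt_of_le_of_ne hkl (Ne.symm hk)
          have hkl' : (ℓ:ℝ) + 1 ≤ (k:ℝ) := by exact_mod_cast hkl2
          rw [abs_of_nonneg (by linarith : (0:ℝ) ≤ (k:ℝ)-(ℓ:ℝ))]
          refine le_trans ?_ (le_abs_self _)
          nlinarith [mul_nonneg (by linarith : (0:ℝ) ≤ (k:ℝ)) (by linarith : (0:ℝ) ≤ (k:ℝ)-(ℓ:ℝ)-1)]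
      -- numerator bound : A^2 ≤ 6 sqrt ℓ
      have hnum : (Acoef k m)^2 ≤ 6 * Real.sqrt ℓ := by
        refine hA.trans ?_
        have h1 : ((k:ℝ)+1) ≤ 4*(ℓ:ℝ) := by
          have : (k:ℝ) ≤ 2*(ℓ:ℝ)+1 := by exact_mod_cast Nat.lt_succ_iff.mp hk2
          linarith
        have h2 : Real.sqrt ((k:ℝ)+1) ≤ Real.sqrt (4*(ℓ:ℝ)) := Real.sqrt_le_sqrt h1
        have h3 : Real.sqrt (4*(ℓ:ℝ)) = 2 * Real.sqrt ℓ := by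
          rw [Real.sqrt_mul (by norm_num : (0:ℝ) ≤ 4),
            show (4:ℝ) = 2^2 by norm_num, Real.sqrt_sq (by norm_num : (0:ℝ) ≤ 2)]
        rw [h3] at h2
        linarith
      have hdpos : (0:ℝ) < (ℓ:ℝ) * |(k:ℝ)-(ℓ:ℝ)| := by positivity
      have step : (Acoef k m)^2 / |(k:ℝ)*((k:ℝ)+1) - lam|
          ≤ (6 * Real.sqrt ℓ) / ((ℓ:ℝ) * |(k:ℝ)-(ℓ:ℝ)|) :=
        div_le_div₀ (by positivity) hnum hdpos hd
      refine step.trans (le_of_eq ?_)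
      have hms : Real.sqrt ℓ * Real.sqrt ℓ = (ℓ:ℝ) :=
        Real.mul_self_sqrt (by linarith)
      field_simp
      linear_combination hms
    · -- region 2
      have hk2' : 2*ℓ+2 ≤ k := by omega
      rw [if_neg (by tauto), if_pos hk2', zero_add]
      have hkR : ((2*ℓ+2:ℕ):ℝ) ≤ (k:ℝ) := by exact_mod_cast hk2'
      push_cast at hkR
      have hk6 : (6:ℝ) ≤ (k:ℝ) := by linarith
      have hd : (3/4)*(k:ℝ)^2 ≤ |(k:ℝ)*((k:ℝ)+1) - lam| := by
        refine le_trans ?_ (le_abs_self _)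
        nlinarith
      have hdpos : (0:ℝ) < (3/4)*(k:ℝ)^2 := by positivity
      have step : (Acoef k m)^2 / |(k:ℝ)*((k:ℝ)+1) - lam|
          ≤ (3 * Real.sqrt ((k:ℝ)+1)) / ((3/4)*(k:ℝ)^2) :=
        div_le_div₀ (by positivity) hA hdpos hd
      refine step.trans ?_
      exact sqrt_tail_bound hk6

lemma Hsum_le (n : ℕ) : ∑ i ∈ Finset.range n, 1/((i:ℝ)+1) ≤ 1 + Real.log n := by
  have h : ((harmonic n : ℚ) : ℝ) = ∑ i ∈ Finset.range n, 1/((i:ℝ)+1) := by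
    unfold harmonic
    push_cast
    simp [one_div]
  rw [← h]
  exact harmonic_le_one_add_log n

lemma Hsum_mono {a b : ℕ} (hab : a ≤ b) :
    ∑ i ∈ Finset.range a, 1/((i:ℝ)+1) ≤ ∑ i ∈ Finset.range b, 1/((i:ℝ)+1) := by
  apply Finset.sum_le_sum_of_subset_of_nonneg (Finset.range_subset_range.mpr hab)
  intro i _ _; positivity

lemma sum_maj1_le {ℓ : ℕ} (hℓ : 2 ≤ ℓ) (n : ℕ) :
    ∑ k ∈ Finset.range n,
      (if k ≠ ℓ ∧ k < 2*ℓ+2 then (1:ℝ)/|(k:ℝ)-(ℓ:ℝ)| else 0)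
      ≤ 2*(1 + Real.log ((ℓ:ℝ)+1)) := by
  set F : ℕ → ℝ := fun k => if k ≠ ℓ ∧ k < 2*ℓ+2 then (1:ℝ)/|(k:ℝ)-(ℓ:ℝ)| else 0 with hF
  have hF0 : ∀ k, 0 ≤ F k := by
    intro k; simp only [hF]; split_ifs <;> positivity
  have step1 : ∑ k ∈ Finset.range n, F k ≤ ∑ k ∈ Finset.range (2*ℓ+2), F k := by
    rcases le_total n (2*ℓ+2) with h | h
    · exact Finset.sum_le_sum_of_subset_of_nonneg (Finset.range_subset_range.mpr h)
        (fun i _ _ => hF0 i)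
    · rw [Finset.range_eq_Ico, ← Finset.sum_Ico_consecutive _ (Nat.zero_le (2*ℓ+2)) h,
        ← Finset.range_eq_Ico]
      have : ∑ k ∈ Finset.Ico (2*ℓ+2) n, F k = 0 := by
        apply Finset.sum_eq_zero
        intro k hk
        simp only [hF]
        rw [if_neg]
        push_neg
        intro _
        exact (Finset.mem_Ico.mp hk).1
      linarith [this.ge]
  have step2 : ∑ k ∈ Finset.range (2*ℓ+2), F k
      = ∑ k ∈ Finset.range ℓ, F k + ∑ i ∈ Finset.range (ℓ+2), F (ℓ+i) := by
    rw [Finset.range_eq_Ico, ← Finset.sum_Ico_consecutive _ (Nat.zero_le ℓ) (by omega : ℓ ≤ 2*ℓ+2),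
      ← Finset.range_eq_Ico, Finset.sum_Ico_eq_sum_range]
    congr 1
    apply Finset.sum_congr (by congr 1; omega) (fun _ _ => rfl)
  have part1 : ∑ k ∈ Finset.range ℓ, F k = ∑ i ∈ Finset.range ℓ, 1/((i:ℝ)+1) := by
    rw [← Finset.sum_range_reflect (fun i => 1/((i:ℝ)+1)) ℓ]
    apply Finset.sum_congr rfl
    intro k hk
    have hkℓ : k < ℓ := Finset.mem_range.mp hk
    simp only [hF]
    rw [if_pos ⟨by omega, by omega⟩]
    congr 1
    have h1 : ((ℓ - 1 - k : ℕ):ℝ) = (ℓ:ℝ) - 1 - k := by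
      rw [Nat.cast_sub (by omega : k ≤ ℓ - 1), Nat.cast_sub (by omega : 1 ≤ ℓ)]
      push_cast; ring
    rw [abs_of_nonpos (by push_cast; linarith [show (k:ℝ) + 1 ≤ (ℓ:ℝ) by exact_mod_cast hkℓ] :
      (k:ℝ) - (ℓ:ℝ) ≤ 0)]
    rw [h1]
    have : (k:ℝ) + 1 ≤ (ℓ:ℝ) := by exact_mod_cast hkℓ
    ring
  have part2 : ∑ i ∈ Finset.range (ℓ+2), F (ℓ+i) = ∑ i ∈ Finset.range (ℓ+1), 1/((i:ℝ)+1) := by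
    rw [show ℓ+2 = (ℓ+1)+1 by ring, Finset.sum_range_succ']
    have h0 : F (ℓ+0) = 0 := by simp [hF]
    rw [h0, add_zero]
    apply Finset.sum_congr rfl
    intro i hi
    have hiℓ : i < ℓ+1 := Finset.mem_range.mp hi
    simp only [hF]
    rw [if_pos ⟨by omega, by omega⟩]
    congr 1
    rw [abs_of_nonneg]
    · push_cast; ring
    · push_cast; linarith [Nat.cast_nonneg (α := ℝ) i]
  calc ∑ k ∈ Finset.range n, F k ≤ ∑ k ∈ Finset.range (2*ℓ+2), F k := step1
    _ = ∑ i ∈ Finset.range ℓ, 1/((i:ℝ)+1) + ∑ i ∈ Finset.range (ℓ+1), 1/((i:ℝ)+1) := by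
        rw [step2, part1, part2]
    _ ≤ 2*(1 + Real.log ((ℓ:ℝ)+1)) := by
        have h1 := Hsum_mono (by omega : ℓ ≤ ℓ+1)
        have h2 := Hsum_le (ℓ+1)
        have h3 : ((ℓ+1:ℕ):ℝ) = (ℓ:ℝ)+1 := by push_cast; ring
        rw [h3] at h2
        linarith

lemma sum_maj2_le {N : ℕ} (hN : 1 ≤ N) (n : ℕ) :
    ∑ k ∈ Finset.range n,
      (if N ≤ k then (1/Real.sqrt k - 1/Real.sqrt ((k:ℝ)+1)) else 0)
      ≤ 1/Real.sqrt N := by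
  set G : ℕ → ℝ := fun k => 1/Real.sqrt ((max k N : ℕ):ℝ) with hG
  have hbound : ∀ k, (if N ≤ k then (1/Real.sqrt k - 1/Real.sqrt ((k:ℝ)+1)) else 0)
      ≤ G k - G (k+1) := by
    intro k
    simp only [hG]
    by_cases h : N ≤ k
    · rw [if_pos h, max_eq_left h, max_eq_left (by omega : N ≤ k+1)]
      push_cast
      exact le_rfl
    · rw [if_neg h, max_eq_right (by omega : k ≤ N), max_eq_right (by omega : k+1 ≤ N),
        sub_self]
  calc ∑ k ∈ Finset.range n, (if N ≤ k then (1/Real.sqrt k - 1/Real.sqrt ((k:ℝ)+1)) else 0)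
      ≤ ∑ k ∈ Finset.range n, (G k - G (k+1)) := Finset.sum_le_sum (fun k _ => hbound k)
    _ = G 0 - G n := Finset.sum_range_sub' G n
    _ ≤ G 0 := by
        have : 0 ≤ G n := by simp only [hG]; positivity
        linarith
    _ = 1/Real.sqrt N := by simp only [hG]; rw [max_eq_right (Nat.zero_le N)]

set_option maxHeartbeats 1000000 in
theorem fourier_coefficient_resolvent_bound :
    ∃ C > 0, ∃ ℓ₀ : ℕ, 2 ≤ ℓ₀ ∧ ∀ ℓ : ℕ, ℓ₀ ≤ ℓ → ∀ lam : ℝ,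
      (ℓ:ℝ)^2 ≤ lam → lam ≤ ((ℓ:ℝ)+1)^2 → ∀ m : ℤ,
      Summable (fun k : ℕ =>
        |if k = ℓ then 0 else (Acoef k m)^2 / ((k:ℝ)*((k:ℝ)+1) - lam)|) ∧
      |∑' k : ℕ, if k = ℓ then 0 else (Acoef k m)^2 / ((k:ℝ)*((k:ℝ)+1) - lam)|
        ≤ C * (ℓ:ℝ) ^ (-(1/2) : ℝ) * Real.log ℓ := by
  refine ⟨100, by norm_num, 2, le_refl 2, fun ℓ hℓ lam hl1 hl2 m => ?_⟩
  have hℓR : (2:ℝ) ≤ (ℓ:ℝ) := by exact_mod_cast hℓ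
  have hsl : (0:ℝ) < Real.sqrt ℓ := Real.sqrt_pos.mpr (by linarith)
  set maj : ℕ → ℝ := fun k =>
    (if k ≠ ℓ ∧ k < 2*ℓ+2 then 6/Real.sqrt ℓ * (1/|(k:ℝ)-(ℓ:ℝ)|) else 0)
    + (if 2*ℓ+2 ≤ k then 16*(1/Real.sqrt k - 1/Real.sqrt ((k:ℝ)+1)) else 0) with hmaj
  have hptw : ∀ k : ℕ,
      |if k = ℓ then (0:ℝ) else (Acoef k m)^2 / ((k:ℝ)*((k:ℝ)+1) - lam)| ≤ maj k :=
    fun k => ptwise hℓ hl1 hl2 m k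
  have hmaj0 : ∀ k, 0 ≤ maj k := by
    intro k
    simp only [hmaj]
    have h2 : (0:ℝ) ≤ (if 2*ℓ+2 ≤ k then 16*(1/Real.sqrt k - 1/Real.sqrt ((k:ℝ)+1)) else 0) := by
      split_ifs with h
      · have hk6 : (1:ℝ) ≤ (k:ℝ) := by
          have : (1:ℕ) ≤ k := by omega
          exact_mod_cast this
        have hsk : (0:ℝ) < Real.sqrt k := Real.sqrt_pos.mpr (by linarith)
        have : (1:ℝ)/Real.sqrt ((k:ℝ)+1) ≤ 1/Real.sqrt k :=
          one_div_le_one_div_of_le hsk (Real.sqrt_le_sqrt (by linarith))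
        linarith
      · exact le_rfl
    have h1 : (0:ℝ) ≤ (if k ≠ ℓ ∧ k < 2*ℓ+2 then 6/Real.sqrt ℓ * (1/|(k:ℝ)-(ℓ:ℝ)|) else 0) := by
      split_ifs <;> positivity
    linarith
  -- partial sum bound
  set B : ℝ := 6/Real.sqrt ℓ * (2*(1 + Real.log ((ℓ:ℝ)+1)))
      + 16 * (1/Real.sqrt ((2*ℓ+2 : ℕ):ℝ)) with hB
  have hpartial : ∀ n, ∑ k ∈ Finset.range n, maj k ≤ B := by
    intro n
    simp only [hmaj]
    rw [Finset.sum_add_distrib]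
    refine add_le_add ?_ ?_
    · have e : ∑ k ∈ Finset.range n,
          (if k ≠ ℓ ∧ k < 2*ℓ+2 then 6/Real.sqrt ℓ * (1/|(k:ℝ)-(ℓ:ℝ)|) else 0)
          = 6/Real.sqrt ℓ * ∑ k ∈ Finset.range n,
            (if k ≠ ℓ ∧ k < 2*ℓ+2 then (1:ℝ)/|(k:ℝ)-(ℓ:ℝ)| else 0) := by
        rw [Finset.mul_sum]
        apply Finset.sum_congr rfl
        intro k _
        split_ifs <;> simp
      rw [e]
      exact mul_le_mul_of_nonneg_left (sum_maj1_le hℓ n) (by positivity)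
    · have e : ∑ k ∈ Finset.range n,
          (if 2*ℓ+2 ≤ k then 16*(1/Real.sqrt k - 1/Real.sqrt ((k:ℝ)+1)) else 0)
          = 16 * ∑ k ∈ Finset.range n,
            (if 2*ℓ+2 ≤ k then (1/Real.sqrt k - 1/Real.sqrt ((k:ℝ)+1)) else 0) := by
        rw [Finset.mul_sum]
        apply Finset.sum_congr rfl
        intro k _
        split_ifs <;> simp
      rw [e]
      exact mul_le_mul_of_nonneg_left (sum_maj2_le (by omega : 1 ≤ 2*ℓ+2) n) (by norm_num)
  have hsummaj : Summable maj := summable_of_sum_range_le hmaj0 hpartial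
  have hsumabs : Summable (fun k : ℕ =>
      |if k = ℓ then (0:ℝ) else (Acoef k m)^2 / ((k:ℝ)*((k:ℝ)+1) - lam)|) :=
    Summable.of_nonneg_of_le (fun k => abs_nonneg _) hptw hsummaj
  refine ⟨hsumabs, ?_⟩
  -- the final numeric bound
  have hrpow : (ℓ:ℝ) ^ (-(1/2) : ℝ) = 1/Real.sqrt ℓ := by
    rw [Real.rpow_neg (Nat.cast_nonneg ℓ), ← Real.sqrt_eq_rpow, one_div]
  have hlog2 : (0.6931471803:ℝ) < Real.log 2 := Real.log_two_gt_d9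
  have hlogl : Real.log 2 ≤ Real.log ℓ := Real.log_le_log (by norm_num) hℓR
  have hlog1 : Real.log ((ℓ:ℝ)+1) ≤ 2 * Real.log ℓ := by
    have h1 : (ℓ:ℝ)+1 ≤ (ℓ:ℝ)^(2:ℕ) := by push_cast; nlinarith
    have := Real.log_le_log (by linarith) h1
    rwa [Real.log_pow, Nat.cast_ofNat] at this
  have hBle : B ≤ 100 * (1/Real.sqrt ℓ) * Real.log ℓ := by
    have h2l : Real.sqrt (ℓ:ℝ) ≤ Real.sqrt ((2*ℓ+2 : ℕ):ℝ) := by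
      apply Real.sqrt_le_sqrt
      push_cast
      linarith
    have h2nd : 16 * (1/Real.sqrt ((2*ℓ+2 : ℕ):ℝ)) ≤ 16 * (1/Real.sqrt ℓ) := by
      have := one_div_le_one_div_of_le hsl h2l
      linarith
    have h1st : 6/Real.sqrt ℓ * (2*(1 + Real.log ((ℓ:ℝ)+1)))
        ≤ 6/Real.sqrt ℓ * (8 * Real.log ℓ) := by
      apply mul_le_mul_of_nonneg_left _ (by positivity)
      linarith
    have e1 : 6/Real.sqrt ℓ * (8 * Real.log ℓ) + 16 * (1/Real.sqrt ℓ)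
        = (48 * Real.log ℓ + 16)/Real.sqrt ℓ := by
      field_simp
      ring
    have e2 : 100 * (1/Real.sqrt ℓ) * Real.log ℓ = (100 * Real.log ℓ)/Real.sqrt ℓ := by
      ring
    rw [hB]
    calc 6/Real.sqrt ℓ * (2*(1 + Real.log ((ℓ:ℝ)+1))) + 16 * (1/Real.sqrt ((2*ℓ+2 : ℕ):ℝ))
        ≤ 6/Real.sqrt ℓ * (8 * Real.log ℓ) + 16 * (1/Real.sqrt ℓ) := add_le_add h1st h2nd
      _ = (48 * Real.log ℓ + 16)/Real.sqrt ℓ := e1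
      _ ≤ (100 * Real.log ℓ)/Real.sqrt ℓ := by
          gcongr
          linarith
      _ = 100 * (1/Real.sqrt ℓ) * Real.log ℓ := e2.symm
  rw [hrpow]
  have habs : |∑' k : ℕ, if k = ℓ then (0:ℝ) else (Acoef k m)^2 / ((k:ℝ)*((k:ℝ)+1) - lam)|
      ≤ ∑' k : ℕ, |if k = ℓ then (0:ℝ) else (Acoef k m)^2 / ((k:ℝ)*((k:ℝ)+1) - lam)| := by
    have h := norm_tsum_le_tsum_norm
      (f := fun k : ℕ => if k = ℓ then (0:ℝ) else (Acoef k m)^2 / ((k:ℝ)*((k:ℝ)+1) - lam))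
      (by simpa [Real.norm_eq_abs] using hsumabs)
    simpa [Real.norm_eq_abs] using h
  refine habs.trans ?_
  have h2 : ∑' k : ℕ, |if k = ℓ then (0:ℝ) else (Acoef k m)^2 / ((k:ℝ)*((k:ℝ)+1) - lam)|
      ≤ ∑' k, maj k := Summable.tsum_le_tsum hptw hsumabs hsummaj
  refine h2.trans ?_
  exact (Real.tsum_le_of_sum_range_le hmaj0 hpartial).trans hBle
end

section
/- lim_{ℓ→∞} (1/ℓ) · Σ_{m=−ℓ}^{ℓ} A_{ℓ,m}² = 2; equivalently, Σ_{m=−ℓ}^{ℓ} A_{ℓ,m}² = (2ℓ/π)·∫_{−1}^{1} (1−ξ²)^{−1/2} dξ + o(ℓ) as ℓ → ∞. -/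
open Real Filter Finset

-- key1: weighted symmetric sum
lemma keyrefl (n : ℕ) :
    ∑ i ∈ range (n+1), (n - i) * (Nat.centralBinom i * Nat.centralBinom (n - i)) =
    ∑ i ∈ range (n+1), i * (Nat.centralBinom i * Nat.centralBinom (n - i)) := by
  rw [← Finset.sum_range_reflect (fun i => i * (Nat.centralBinom i * Nat.centralBinom (n - i))) (n+1)]
  apply Finset.sum_congr rfl
  intro i hi
  simp only [Finset.mem_range] at hi
  have h : i ≤ n := Nat.lt_succ_iff.mp hi
  have : n + 1 - 1 - i = n - i := by omega
  rw [this, Nat.sub_sub_self h, mul_comm (Nat.centralBinom (n-i))]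

lemma key1 (n : ℕ) :
    2 * ∑ i ∈ range (n+1), i * (Nat.centralBinom i * Nat.centralBinom (n - i)) =
    n * ∑ i ∈ range (n+1), Nat.centralBinom i * Nat.centralBinom (n - i) := by
  have h : ∀ i ∈ range (n+1),
      (i + (n - i)) * (Nat.centralBinom i * Nat.centralBinom (n - i)) =
      n * (Nat.centralBinom i * Nat.centralBinom (n - i)) := by
    intro i hi; simp only [Finset.mem_range] at hi
    congr 1; omega
  calc 2 * ∑ i ∈ range (n+1), i * (Nat.centralBinom i * Nat.centralBinom (n - i))
      = ∑ i ∈ range (n+1), i * (Nat.centralBinom i * Nat.centralBinom (n - i))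
        + ∑ i ∈ range (n+1), (n - i) * (Nat.centralBinom i * Nat.centralBinom (n - i)) := by
        rw [keyrefl]; ring
    _ = ∑ i ∈ range (n+1), (i + (n - i)) * (Nat.centralBinom i * Nat.centralBinom (n - i)) := by
        rw [← Finset.sum_add_distrib]
        exact Finset.sum_congr rfl (fun i _ => by ring)
    _ = ∑ i ∈ range (n+1), n * (Nat.centralBinom i * Nat.centralBinom (n - i)) :=
        Finset.sum_congr rfl h
    _ = _ := by rw [← Finset.mul_sum]

lemma cb_conv (n : ℕ) :
    ∑ i ∈ range (n+1), Nat.centralBinom i * Nat.centralBinom (n - i) = 4 ^ n := by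
  induction n with
  | zero => simp [Nat.centralBinom]
  | succ n ih =>
    have hmul : (n+1) * ∑ i ∈ range (n+2), Nat.centralBinom i * Nat.centralBinom (n+1 - i)
        = (n+1) * 4 ^ (n+1) := by
      have e1 : ∀ i ∈ range (n+2),
          (n+1) * (Nat.centralBinom i * Nat.centralBinom (n+1 - i)) =
          i * (Nat.centralBinom i * Nat.centralBinom (n+1 - i))
          + (n+1-i) * (Nat.centralBinom i * Nat.centralBinom (n+1 - i)) := by
        intro i hi; simp only [Finset.mem_range] at hi
        rw [← add_mul]; congr 1; omega
      rw [Finset.mul_sum, Finset.sum_congr rfl e1, Finset.sum_add_distrib]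
      -- second sum equals first by reflection
      have e2 : ∑ i ∈ range (n+2), (n+1-i) * (Nat.centralBinom i * Nat.centralBinom (n+1 - i)) =
          ∑ i ∈ range (n+2), i * (Nat.centralBinom i * Nat.centralBinom (n+1 - i)) := keyrefl (n+1)
      rw [e2, ← two_mul]
      -- shift: drop i = 0 term and reindex
      have e3 : ∑ i ∈ range (n+2), i * (Nat.centralBinom i * Nat.centralBinom (n+1 - i)) =
          ∑ i ∈ range (n+1), (i+1) * (Nat.centralBinom (i+1) * Nat.centralBinom (n - i)) := by
        rw [Finset.sum_range_succ'] -- splits off i = 0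
        simp only [Nat.zero_mul, add_zero]
        apply Finset.sum_congr rfl
        intro i hi; simp only [Finset.mem_range] at hi
        congr 3
        omega
      rw [e3]
      have e4 : ∀ i ∈ range (n+1),
          (i+1) * (Nat.centralBinom (i+1) * Nat.centralBinom (n - i)) =
          2 * (2*i+1) * (Nat.centralBinom i * Nat.centralBinom (n - i)) := by
        intro i _
        rw [← mul_assoc, Nat.succ_mul_centralBinom_succ, mul_assoc]
      rw [Finset.sum_congr rfl e4]
      have e5 : ∀ i ∈ range (n+1),
          2 * (2*i+1) * (Nat.centralBinom i * Nat.centralBinom (n - i)) =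
          4 * (i * (Nat.centralBinom i * Nat.centralBinom (n - i)))
          + 2 * (Nat.centralBinom i * Nat.centralBinom (n - i)) := by
        intro i _; ring
      rw [Finset.sum_congr rfl e5, Finset.sum_add_distrib, ← Finset.mul_sum, ← Finset.mul_sum,
        mul_add, ← mul_assoc, ← mul_assoc]
      have h2 := key1 n
      rw [ih] at h2 ⊢
      rw [pow_succ]
      nlinarith [h2]
    exact Nat.eq_of_mul_eq_mul_left (Nat.succ_pos n) hmul

noncomputable def cfun (k : ℕ) : ℝ := Real.Gamma (k + 1/2) / (k.factorial : ℝ)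

lemma Ghalf (k : ℕ) :
    Real.Gamma (k + 1/2) * 4^k * (k.factorial : ℝ) = Real.sqrt π * ((2*k).factorial : ℝ) := by
  induction k with
  | zero =>
    simp
    rw [← one_div, Real.Gamma_one_half_eq]
  | succ k ih =>
    have h1 : ((k:ℝ) + 1) + 1/2 = ((k:ℝ) + 1/2) + 1 := by push_cast; ring
    have h2 : Real.Gamma (((k:ℝ) + 1/2) + 1) = ((k:ℝ) + 1/2) * Real.Gamma ((k:ℝ) + 1/2) :=
      Real.Gamma_add_one (by positivity)
    have hfac : ((k+1 : ℕ).factorial : ℝ) = ((k:ℝ)+1) * k.factorial := by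
      push_cast [Nat.factorial_succ]; ring
    have hfac2 : ((2*(k+1) : ℕ).factorial : ℝ) = (2*(k:ℝ)+2) * (2*(k:ℝ)+1) * (2*k).factorial := by
      have : 2*(k+1) = (2*k+1) + 1 := by ring
      rw [this, Nat.factorial_succ, show 2*k+1 = (2*k)+1 from rfl, Nat.factorial_succ]
      push_cast; ring
    push_cast at ih ⊢
    rw [h1, h2, hfac, hfac2, pow_succ]
    linear_combination (2*(k:ℝ)+1) * (2*(k:ℝ)+2) * ih

lemma cfun_eq (k : ℕ) : cfun k = Real.sqrt π * k.centralBinom / 4^k := by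
  have h1 := Ghalf k
  have hn : k.centralBinom * (k.factorial * k.factorial) = (2*k).factorial := by
    rw [Nat.centralBinom_eq_two_mul_choose]
    have h := Nat.choose_mul_factorial_mul_factorial (show k ≤ 2*k by omega)
    rw [show 2*k - k = k by omega] at h
    rw [← h]; ring
  have h2 : (k.centralBinom : ℝ) * ((k.factorial : ℝ) * k.factorial) = ((2*k).factorial : ℝ) := by
    exact_mod_cast congrArg (Nat.cast : ℕ → ℝ) hn
  have hf : ((k.factorial : ℝ)) ≠ 0 := by positivity
  rw [cfun, div_eq_div_iff hf (by positivity)]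
  apply mul_right_cancel₀ hf
  rw [mul_comm (Real.Gamma ((k:ℝ) + 1/2)) ((4:ℝ)^k)] at h1 ⊢
  linear_combination h1 - Real.sqrt π * h2

lemma cfun_conv (n : ℕ) : ∑ i ∈ range (n+1), cfun i * cfun (n - i) = π := by
  have h : ∀ i ∈ range (n+1), cfun i * cfun (n - i)
      = π / 4^n * ((Nat.centralBinom i * Nat.centralBinom (n - i) : ℕ) : ℝ) := by
    intro i hi
    simp only [Finset.mem_range] at hi
    have hin : i ≤ n := Nat.lt_succ_iff.mp hi
    rw [cfun_eq, cfun_eq]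
    have h4 : (4:ℝ)^i * 4^(n-i) = 4^n := by
      rw [← pow_add]; congr 1; omega
    have hs : Real.sqrt π * Real.sqrt π = π := Real.mul_self_sqrt Real.pi_pos.le
    calc Real.sqrt π * i.centralBinom / 4^i * (Real.sqrt π * (n-i).centralBinom / 4^(n-i))
        = Real.sqrt π * Real.sqrt π * ((i.centralBinom : ℝ) * (n-i).centralBinom)
          / (4^i * 4^(n-i)) := by ring
      _ = π / 4^n * ((Nat.centralBinom i * Nat.centralBinom (n - i) : ℕ) : ℝ) := by
          rw [hs, h4]; push_cast; ring
  rw [Finset.sum_congr rfl h, ← Finset.mul_sum, ← Nat.cast_sum, cb_conv]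
  push_cast
  field_simp

lemma gam_two (k : ℕ) : gam (2*k) = cfun k := by
  have h1 : (2*(k:ℝ))/2 + 1/2 = (k:ℝ) + 1/2 := by ring
  have h2 : (2*(k:ℝ))/2 + 1 = (k:ℝ) + 1 := by ring
  simp only [gam]
  push_cast
  rw [h1, h2, Real.Gamma_nat_eq_factorial, cfun]

lemma cfun_nonneg (k : ℕ) : 0 ≤ cfun k :=
  div_nonneg (Real.Gamma_pos_of_pos (by positivity)).le (Nat.cast_nonneg _)

lemma sum_sq (ℓ : ℕ) :
    ∑ m ∈ Finset.Icc (-(ℓ:ℤ)) (ℓ:ℤ), (Acoef ℓ m)^2 = 2*(ℓ:ℝ)+1 := by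
  have hsub : (range (ℓ+1)).image (fun i : ℕ => (ℓ:ℤ) - 2*i) ⊆ Finset.Icc (-(ℓ:ℤ)) (ℓ:ℤ) := by
    intro m hm
    simp only [Finset.mem_image, Finset.mem_range] at hm
    obtain ⟨i, hi, rfl⟩ := hm
    simp only [Finset.mem_Icc]
    omega
  have hzero : ∀ m ∈ Finset.Icc (-(ℓ:ℤ)) (ℓ:ℤ),
      m ∉ (range (ℓ+1)).image (fun i : ℕ => (ℓ:ℤ) - 2*i) → (Acoef ℓ m)^2 = 0 := by
    intro m hm hnot
    simp only [Finset.mem_Icc] at hm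
    rw [Acoef, if_neg ?_]
    · ring
    · rintro ⟨habs, heven⟩
      apply hnot
      obtain ⟨j, hj⟩ := heven
      simp only [Finset.mem_image, Finset.mem_range]
      refine ⟨j.toNat, by omega, by omega⟩
  have hinj : ∀ i ∈ range (ℓ+1), ∀ j ∈ range (ℓ+1),
      (ℓ:ℤ) - 2*i = (ℓ:ℤ) - 2*j → i = j := by
    intro i _ j _ h; omega
  rw [← Finset.sum_subset hsub hzero, Finset.sum_image hinj]
  have hterm : ∀ i ∈ range (ℓ+1),
      (Acoef ℓ ((ℓ:ℤ) - 2*i))^2 = (2*(ℓ:ℝ)+1)/π * (cfun i * cfun (ℓ - i)) := by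
    intro i hi
    simp only [Finset.mem_range] at hi
    have hin : i ≤ ℓ := Nat.lt_succ_iff.mp hi
    have hcond : |(ℓ:ℤ) - 2*i| ≤ (ℓ:ℤ) ∧ Even ((ℓ:ℤ) - ((ℓ:ℤ) - 2*i)) := by
      constructor
      · rw [abs_le]; omega
      · exact ⟨i, by ring⟩
    rw [Acoef, if_pos hcond]
    have ha : (ℓ:ℝ) - (((ℓ:ℤ) - 2*i : ℤ) : ℝ) = 2*(i:ℝ) := by push_cast; ring
    have hb : (ℓ:ℝ) + (((ℓ:ℤ) - 2*i : ℤ) : ℝ) = 2*((ℓ - i : ℕ) : ℝ) := by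
      push_cast [Nat.cast_sub hin]; ring
    rw [ha, hb, gam_two, gam_two]
    have hnn : (0:ℝ) ≤ (2*(ℓ:ℝ)+1)/π * cfun i * cfun (ℓ - i) :=
      mul_nonneg (mul_nonneg (by positivity) (cfun_nonneg i)) (cfun_nonneg _)
    rw [Real.sq_sqrt hnn]
    ring
  rw [Finset.sum_congr rfl hterm, ← Finset.mul_sum, cfun_conv,
    div_mul_cancel₀ _ Real.pi_ne_zero]

theorem sum_Acoef_sq_asymptotics :
    Tendsto
      (fun ℓ : ℕ => (1/(ℓ:ℝ)) * ∑ m ∈ Finset.Icc (-(ℓ:ℤ)) (ℓ:ℤ), (Acoef ℓ m)^2)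
      atTop (nhds 2) := by
  have h2 : Tendsto (fun ℓ : ℕ => 2 + 1/(ℓ:ℝ)) atTop (nhds 2) := by
    simpa using tendsto_const_nhds.add (tendsto_one_div_atTop_nhds_zero_nat (𝕜 := ℝ))
  apply h2.congr'
  filter_upwards [eventually_ge_atTop 1] with ℓ hℓ
  have hℓ' : (ℓ:ℝ) ≠ 0 := by positivity
  rw [sum_sq]
  field_simp
end

section
/- There exists a constant C > 0 such that for every integer ℓ ≥ 1 and every real ε ∈ (0,1), the sum over all integers m with (1−ε)·ℓ < |m| < ℓ of (1 − (m/ℓ)²)^{−1/2} is at most C·ℓ·√ε. -/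
open Real Finset

lemma sum_inv_sqrt_le (n : ℕ) : ∑ k ∈ Finset.Icc 1 n, (1:ℝ) / Real.sqrt k ≤ 2 * Real.sqrt n := by
  induction n with
  | zero => simp
  | succ n ih =>
    rw [Finset.sum_Icc_succ_top (by omega)]
    have ha : (0:ℝ) ≤ Real.sqrt n := Real.sqrt_nonneg _
    have hb : (0:ℝ) < Real.sqrt (n+1) := Real.sqrt_pos.2 (by positivity)
    have ha2 : Real.sqrt n ^ 2 = (n:ℝ) := Real.sq_sqrt (by positivity)
    have hb2 : Real.sqrt (n+1) ^ 2 = (n:ℝ)+1 := Real.sq_sqrt (by positivity)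
    have key : (1:ℝ) / Real.sqrt ((n:ℕ)+1) ≤ 2 * Real.sqrt (n+1) - 2 * Real.sqrt n := by
      rw [div_le_iff₀ hb]
      nlinarith [sq_nonneg (Real.sqrt (n+1) - Real.sqrt n), mul_nonneg ha hb.le]
    push_cast at key ⊢
    linarith

open scoped Classical in
lemma bind_pure_cast (s : Finset ℤ) :
    (do let a ← s; pure ((a : ℝ)) : Finset ℝ) = s.image (fun a : ℤ => (a:ℝ)) := by
  exact Finset.sup_singleton_apply _ _

open scoped Classical in
theorem sum_edge_terms_le :
    ∃ C > 0, ∀ ℓ : ℕ, 1 ≤ ℓ → ∀ ε : ℝ, 0 < ε → ε < 1 →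
      ∑ m ∈ (Finset.Icc (-(ℓ:ℤ) + 1) ((ℓ:ℤ) - 1)).filter
          (fun m => (1 - ε) * (ℓ:ℝ) < |(m:ℝ)|),
        ((1 - ((m:ℝ)/(ℓ:ℝ))^2) ^ (-(1/2) : ℝ) : ℝ)
      ≤ C * (ℓ:ℝ) * Real.sqrt ε := by
  refine ⟨4, by norm_num, ?_⟩
  intro ℓ hℓ ε hε0 hε1
  rw [bind_pure_cast, Finset.filter_image,
    Finset.sum_image (fun x _ y _ h => by exact_mod_cast h)]
  have hℓR : (0:ℝ) < (ℓ:ℝ) := by exact_mod_cast hℓ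
  set n : ℕ := (⌊ε * (ℓ:ℝ)⌋).toNat with hn
  set S := (Finset.Icc (-(ℓ:ℤ) + 1) ((ℓ:ℤ) - 1)).filter
      (fun m : ℤ => (1 - ε) * (ℓ:ℝ) < |(m:ℝ)|) with hS
  -- basic facts about members of S
  have hmemS : ∀ m ∈ S, m.natAbs + 1 ≤ ℓ ∧ (1 - ε) * (ℓ:ℝ) < |(m:ℝ)| := by
    intro m hm
    rw [hS, Finset.mem_filter, Finset.mem_Icc] at hm
    exact ⟨by omega, hm.2⟩
  have habs : ∀ m : ℤ, |(m:ℝ)| = (m.natAbs : ℝ) := by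
    intro m; rw [Nat.cast_natAbs, Int.cast_abs]
  have hφcast : ∀ m ∈ S, ((ℓ - m.natAbs : ℕ) : ℝ) = (ℓ:ℝ) - |(m:ℝ)| := by
    intro m hm
    have h1 := (hmemS m hm).1
    rw [habs]
    push_cast [Nat.cast_sub (by omega : m.natAbs ≤ ℓ)]
    ring
  -- maps S into Icc 1 n
  have hmaps : ∀ m ∈ S, ℓ - m.natAbs ∈ Finset.Icc 1 n := by
    intro m hm
    obtain ⟨h1, h2⟩ := hmemS m hm
    have hlt : ((ℓ - m.natAbs : ℕ) : ℝ) < ε * (ℓ:ℝ) := by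
      rw [hφcast m hm]; nlinarith
    have hfl : ((ℓ - m.natAbs : ℕ) : ℤ) ≤ ⌊ε * (ℓ:ℝ)⌋ := Int.le_floor.2 (by exact_mod_cast hlt.le)
    rw [Finset.mem_Icc]
    exact ⟨by omega, by omega⟩
  -- pointwise bound
  have hpt : ∀ m ∈ S, ((1 - ((m:ℝ)/(ℓ:ℝ))^2) ^ (-(1/2) : ℝ) : ℝ)
      ≤ Real.sqrt (ℓ:ℝ) / Real.sqrt ((ℓ - m.natAbs : ℕ)) := by
    intro m hm
    obtain ⟨h1, _⟩ := hmemS m hm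
    have habm : |(m:ℝ)| ≤ (ℓ:ℝ) - 1 := by
      rw [habs]
      have : (m.natAbs : ℝ) + 1 ≤ (ℓ:ℝ) := by exact_mod_cast h1
      linarith
    have habm0 : (0:ℝ) ≤ |(m:ℝ)| := abs_nonneg _
    set x : ℝ := 1 - ((m:ℝ)/(ℓ:ℝ))^2 with hx
    have hm2 : ((m:ℝ))^2 = |(m:ℝ)|^2 := (sq_abs _).symm
    have hxlb : ((ℓ - m.natAbs : ℕ) : ℝ) / (ℓ:ℝ) ≤ x := by
      have key : x - ((ℓ - m.natAbs : ℕ) : ℝ) / (ℓ:ℝ)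
          = |(m:ℝ)| * ((ℓ:ℝ) - |(m:ℝ)|) / (ℓ:ℝ)^2 := by
        rw [hφcast m hm, hx, div_pow]
        field_simp
        linear_combination (-1:ℝ) * hm2
      have hnn : (0:ℝ) ≤ |(m:ℝ)| * ((ℓ:ℝ) - |(m:ℝ)|) / (ℓ:ℝ)^2 :=
        div_nonneg (mul_nonneg habm0 (by linarith)) (by positivity)
      linarith
    have hφ1 : 1 ≤ ℓ - m.natAbs := by omega
    have hφpos : (0:ℝ) < ((ℓ - m.natAbs : ℕ) : ℝ) / (ℓ:ℝ) := by
      have : (1:ℝ) ≤ ((ℓ - m.natAbs : ℕ) : ℝ) := by exact_mod_cast hφ1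
      positivity
    have hx0 : (0:ℝ) < x := lt_of_lt_of_le hφpos hxlb
    rw [Real.rpow_neg hx0.le, ← Real.sqrt_eq_rpow]
    have hsq : Real.sqrt (((ℓ - m.natAbs : ℕ) : ℝ) / (ℓ:ℝ)) ≤ Real.sqrt x :=
      Real.sqrt_le_sqrt hxlb
    have hsp : (0:ℝ) < Real.sqrt (((ℓ - m.natAbs : ℕ) : ℝ) / (ℓ:ℝ)) := Real.sqrt_pos.2 hφpos
    calc (Real.sqrt x)⁻¹ ≤ (Real.sqrt (((ℓ - m.natAbs : ℕ) : ℝ) / (ℓ:ℝ)))⁻¹ :=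
          inv_anti₀ hsp hsq
      _ = Real.sqrt (ℓ:ℝ) / Real.sqrt ((ℓ - m.natAbs : ℕ)) := by
          rw [Real.sqrt_div (by positivity), inv_div]
  -- fiber cardinality bound
  have hfib : ∀ k ∈ Finset.Icc 1 n, (S.filter (fun m => ℓ - m.natAbs = k)).card ≤ 2 := by
    intro k _
    have hsub : S.filter (fun m => ℓ - m.natAbs = k) ⊆ {((ℓ:ℤ) - k), -((ℓ:ℤ) - k)} := by
      intro m hm
      rw [Finset.mem_filter] at hm
      obtain ⟨hmS, hmk⟩ := hm
      have h1 := (hmemS m hmS).1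
      have hna : m.natAbs = ℓ - k := by omega
      have hk : k ≤ ℓ := by omega
      have hcases : m = ((ℓ - k : ℕ) : ℤ) ∨ m = -((ℓ - k : ℕ) : ℤ) := by
        rcases Int.natAbs_eq m with h | h
        · left; rw [h, hna]
        · right; rw [h, hna]
      simp only [Finset.mem_insert, Finset.mem_singleton]
      rcases hcases with h | h
      · left; rw [h]; push_cast [Nat.cast_sub hk]; ring
      · right; rw [h]; push_cast [Nat.cast_sub hk]; ring
    calc (S.filter (fun m => ℓ - m.natAbs = k)).card
        ≤ ({((ℓ:ℤ) - k), -((ℓ:ℤ) - k)} : Finset ℤ).card := Finset.card_le_card hsub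
      _ ≤ 2 := Finset.card_insert_le _ _ |>.trans (by simp)
  -- n ≤ ε ℓ
  have hnle : (n:ℝ) ≤ ε * (ℓ:ℝ) := by
    have h0 : (0:ℤ) ≤ ⌊ε * (ℓ:ℝ)⌋ := Int.floor_nonneg.2 (by positivity)
    have h1 : ((n:ℕ):ℤ) = ⌊ε * (ℓ:ℝ)⌋ := by omega
    have h2 : ((n:ℕ):ℝ) = (⌊ε * (ℓ:ℝ)⌋ : ℝ) := by exact_mod_cast h1
    rw [h2]; exact Int.floor_le _
  have hsqrt_nonneg : ∀ k : ℕ, (0:ℝ) ≤ Real.sqrt (ℓ:ℝ) / Real.sqrt k := by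
    intro k; positivity
  -- main chain
  calc ∑ m ∈ S, ((1 - ((m:ℝ)/(ℓ:ℝ))^2) ^ (-(1/2) : ℝ) : ℝ)
      ≤ ∑ m ∈ S, Real.sqrt (ℓ:ℝ) / Real.sqrt ((ℓ - m.natAbs : ℕ)) := Finset.sum_le_sum hpt
    _ = ∑ k ∈ Finset.Icc 1 n, ∑ m ∈ S.filter (fun m => ℓ - m.natAbs = k),
          Real.sqrt (ℓ:ℝ) / Real.sqrt ((ℓ - m.natAbs : ℕ)) :=
        (Finset.sum_fiberwise_of_maps_to hmaps _).symm
    _ ≤ ∑ k ∈ Finset.Icc 1 n, 2 * (Real.sqrt (ℓ:ℝ) / Real.sqrt k) := by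
        refine Finset.sum_le_sum (fun k hk => ?_)
        have heq : ∑ m ∈ S.filter (fun m => ℓ - m.natAbs = k),
              Real.sqrt (ℓ:ℝ) / Real.sqrt ((ℓ - m.natAbs : ℕ))
            = (S.filter (fun m => ℓ - m.natAbs = k)).card
              * (Real.sqrt (ℓ:ℝ) / Real.sqrt k) := by
          rw [Finset.sum_congr rfl (fun m hm => by
            rw [(Finset.mem_filter.1 hm).2]), Finset.sum_const, nsmul_eq_mul]
        rw [heq]
        have hc : ((S.filter (fun m => ℓ - m.natAbs = k)).card : ℝ) ≤ 2 := by
          exact_mod_cast hfib k hk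
        exact mul_le_mul_of_nonneg_right hc (hsqrt_nonneg k)
    _ = 2 * Real.sqrt (ℓ:ℝ) * ∑ k ∈ Finset.Icc 1 n, (1:ℝ) / Real.sqrt k := by
        rw [Finset.mul_sum]; exact Finset.sum_congr rfl (fun k _ => by ring)
    _ ≤ 2 * Real.sqrt (ℓ:ℝ) * (2 * Real.sqrt n) := by
        have := sum_inv_sqrt_le n
        have h2 : (0:ℝ) ≤ 2 * Real.sqrt (ℓ:ℝ) := by positivity
        exact mul_le_mul_of_nonneg_left this h2
    _ ≤ 2 * Real.sqrt (ℓ:ℝ) * (2 * Real.sqrt (ε * (ℓ:ℝ))) := by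
        have hmono : Real.sqrt (n:ℝ) ≤ Real.sqrt (ε * (ℓ:ℝ)) := Real.sqrt_le_sqrt hnle
        have h2 : (0:ℝ) ≤ 2 * Real.sqrt (ℓ:ℝ) := by positivity
        nlinarith [Real.sqrt_nonneg (n:ℝ)]
    _ = 4 * (ℓ:ℝ) * Real.sqrt ε := by
        rw [Real.sqrt_mul hε0.le]
        have hss : Real.sqrt (ℓ:ℝ) * Real.sqrt (ℓ:ℝ) = (ℓ:ℝ) :=
          Real.mul_self_sqrt hℓR.le
        linear_combination (4 * Real.sqrt ε) * hss
end
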